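/- arXiv:1206.0240 — 2 statements merged into one kernel-verified Lean document; each statement's English description precedes it below -/
import Mathlib

section
/- For C_n (n ≥ 2) and k ∈ ℕ, the number of tuples (u_0,…,u_n) of nonnegative integers with u_1,…,u_{n−1} ≥ 1 and u_0 + 2u_1 + ⋯ + 2u_{n−1} + u_n = 2k equals C(k+1, n) + C(k, n), and with the same constraints summing to 2k+1 it equals 2·C(k+1, n). -/
/-!
Split the points by the parity `ε` of `u₀`. Writing `u₀ = 2a + ε` and `uᵢ = vᵢ + 1` for
`0 < i < n`, the last coordinate `uₙ` is determined by the level `N` and only has to be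
nonnegative, so the points of parity `ε` correspond to the tuples `(a, v₁, …, vₙ₋₁)` with
`2 (a + ∑ vᵢ + n - 1) + ε ≤ N`. By stars and bars there are `C(⌊N/2⌋ + 1, n)` of these for
`ε = 0` and `C(⌈N/2⌉, n)` for `ε = 1`.
-/

open Finset

namespace Fin

theorem ncard_sum_eq (m s : ℕ) :
    {w : Fin m → ℕ | ∑ i, w i = s}.ncard = (m + s - 1).choose s := by
  have h : {w : Fin m → ℕ | ∑ i, w i = s} = ↑(univ.piAntidiag s : Finset (Fin m → ℕ)) := by
    ext w; simp
  rw [h, Set.ncard_coe_finset, ← map_sym_eq_piAntidiag, card_map, sym_univ, card_univ,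
    Sym.card_sym_eq_choose, Fintype.card_fin]

theorem ncard_sum_le (n t : ℕ) :
    {v : Fin n → ℕ | ∑ i, v i ≤ t}.ncard = (t + n).choose n := by
  have hslack : Set.BijOn (fun v : Fin n → ℕ => (Fin.snoc v (t - ∑ i, v i) : Fin (n + 1) → ℕ))
      {v | ∑ i, v i ≤ t} {w | ∑ i, w i = t} := by
    refine Set.InvOn.bijOn (f' := Fin.init) ⟨fun v _ => Fin.init_snoc _ _, fun w hw => ?_⟩
      (fun v hv => ?_) (fun w hw => ?_)
    · have hlast : t - ∑ i, Fin.init w i = w (Fin.last n) := by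
        simp only [Set.mem_ofPred_eq, Fin.sum_univ_castSucc] at hw
        simp only [Fin.init]
        omega
      change Fin.snoc (Fin.init w) _ = w
      rw [hlast, Fin.snoc_init_self]
    · simp only [Set.mem_ofPred_eq, Fin.sum_univ_castSucc, Fin.snoc_castSucc,
        Fin.snoc_last] at hv ⊢
      omega
    · simp only [Set.mem_ofPred_eq, Fin.sum_univ_castSucc] at hw ⊢
      simp only [Fin.init]
      omega
  rw [hslack.ncard_eq, ncard_sum_eq, show n + 1 + t - 1 = t + n by omega, Nat.choose_symm_add]

-- Truncated subtraction makes both sides vanish when `b < a`.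
theorem ncard_sum_add_le {n : ℕ} (hn : n ≠ 0) (a b : ℕ) :
    {v : Fin n → ℕ | ∑ i, v i + a ≤ b}.ncard = (b + n - a).choose n := by
  rcases le_or_gt a b with hab | hab
  · rw [show b + n - a = (b - a) + n by omega, ← ncard_sum_le]
    congr 1; ext v; simp only [Set.mem_ofPred_eq]; omega
  · have hempty : {v : Fin n → ℕ | ∑ i, v i + a ≤ b} = ∅ :=
      Set.eq_empty_of_forall_notMem fun v hv => by simp only [Set.mem_ofPred_eq] at hv; omega
    rw [hempty, Set.ncard_empty, Nat.choose_eq_zero_of_lt (by omega)]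

end Fin

namespace Cn

def mark (n : ℕ) (i : Fin (n + 1)) : ℕ := if (i : ℕ) = 0 ∨ (i : ℕ) = n then 1 else 2

-- The grid `F^s_M` of `C_n` at level `N`; coordinate `0` is the affine node.
def grid (n N : ℕ) : Set (Fin (n + 1) → ℕ) :=
  {u | (∀ i : Fin (n + 1), 1 ≤ (i : ℕ) → (i : ℕ) ≤ n - 1 → 1 ≤ u i) ∧
    ∑ i, mark n i * u i = N}

theorem grid_finite (n N : ℕ) : (grid n N).Finite := by
  refine (Set.finite_Iic fun _ => N).subset fun u hu i => ?_
  calc u i ≤ mark n i * u i := Nat.le_mul_of_pos_left _ (by unfold mark; split <;> norm_num)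
    _ ≤ ∑ j, mark n j * u j :=
        single_le_sum (f := fun j => mark n j * u j) (fun _ _ => Nat.zero_le _) (mem_univ i)
    _ = N := hu.2

theorem grid_succ (m N : ℕ) :
    grid (m + 1) N = {u | (∀ j : Fin m, 1 ≤ u j.succ.castSucc) ∧
      u 0 + 2 * ∑ j : Fin m, u j.succ.castSucc + u (Fin.last _) = N} := by
  ext u
  simp only [grid, Set.mem_ofPred_eq, Nat.add_sub_cancel]
  congr! 1
  · constructor
    · exact fun h j => h _ (by simp) (by simp [j.isLt])
    · intro h i hi1 him
      induction i using Fin.lastCases with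
      | last => simp at him
      | cast i =>
        induction i using Fin.cases with
        | zero => simp at hi1
        | succ j => exact h j
  · rw [Fin.sum_univ_castSucc, Fin.sum_univ_succ, mul_sum]
    simp [mark, Fin.val_succ, ne_of_lt (Fin.is_lt _)]

section Parity

variable (m N ε : ℕ)

def lower (u : Fin (m + 2) → ℕ) : Fin (m + 1) → ℕ :=
  Fin.cons (u 0 / 2) fun j => u j.succ.castSucc - 1

def lift (v : Fin (m + 1) → ℕ) : Fin (m + 2) → ℕ :=
  Fin.snoc (Fin.cons (2 * v 0 + ε) fun j => v j.succ + 1 : Fin (m + 1) → ℕ)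
    (N - (2 * (∑ i, v i + m) + ε))

theorem lift_zero (v : Fin (m + 1) → ℕ) : lift m N ε v 0 = 2 * v 0 + ε :=
  (Fin.snoc_castSucc _ _ 0).trans (Fin.cons_zero _ _)

theorem lift_succ_castSucc (v : Fin (m + 1) → ℕ) (j : Fin m) :
    lift m N ε v j.succ.castSucc = v j.succ + 1 := by
  rw [lift, Fin.snoc_castSucc, Fin.cons_succ]

theorem lift_last (v : Fin (m + 1) → ℕ) :
    lift m N ε v (Fin.last _) = N - (2 * (∑ i, v i + m) + ε) :=
  Fin.snoc_last _ _

theorem sum_lower_add (u : Fin (m + 2) → ℕ) (hu : ∀ j : Fin m, 1 ≤ u j.succ.castSucc) :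
    ∑ i, lower m u i + m = u 0 / 2 + ∑ j : Fin m, u j.succ.castSucc := by
  have hsub : ∑ j : Fin m, (u j.succ.castSucc - 1) + m = ∑ j : Fin m, u j.succ.castSucc := by
    calc ∑ j : Fin m, (u j.succ.castSucc - 1) + m = ∑ j : Fin m, (u j.succ.castSucc - 1 + 1) := by
          simp [sum_add_distrib]
      _ = _ := sum_congr rfl fun j _ => Nat.sub_add_cancel (hu j)
  simp only [Fin.sum_univ_succ, lower, Fin.cons_zero, Fin.cons_succ]
  omega

theorem ncard_grid_inter_parity (hε : ε < 2) :
    (grid (m + 1) N ∩ {u | u 0 % 2 = ε}).ncard =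
      {v : Fin (m + 1) → ℕ | 2 * (∑ i, v i + m) + ε ≤ N}.ncard := by
  symm
  refine Set.BijOn.ncard_eq (f := lift m N ε) (Set.InvOn.bijOn (f' := lower m)
    ⟨fun v _ => ?_, fun u hu => ?_⟩ (fun v hv => ?_) (fun u hu => ?_))
  · funext i
    induction i using Fin.cases with
    | zero => simp only [lower, Fin.cons_zero, lift_zero]; omega
    | succ j => simp only [lower, Fin.cons_succ, lift_succ_castSucc, Nat.add_sub_cancel]
  · obtain ⟨hu, hpar : u 0 % 2 = ε⟩ := hu
    rw [grid_succ] at hu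
    obtain ⟨hpos, hsum⟩ := hu
    have hlower := sum_lower_add m u hpos
    funext i
    induction i using Fin.lastCases with
    | last => rw [lift_last]; omega
    | cast i =>
      induction i using Fin.cases with
      | zero => simp only [Fin.castSucc_zero, lift_zero, lower, Fin.cons_zero]; omega
      | succ j =>
        simp only [lift_succ_castSucc, lower, Fin.cons_succ]
        exact Nat.sub_add_cancel (hpos j)
  · refine ⟨?_, ?_⟩
    · rw [grid_succ]
      refine ⟨fun j => by rw [lift_succ_castSucc]; omega, ?_⟩
      have hv' : 2 * (∑ i, v i + m) + ε ≤ N := hv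
      simp only [lift_zero, lift_succ_castSucc, lift_last, sum_add_distrib,
        sum_const, card_univ, Fintype.card_fin, smul_eq_mul, mul_one]
      rw [Fin.sum_univ_succ] at hv' ⊢
      omega
    · simp only [Set.mem_ofPred_eq, lift_zero]; omega
  · obtain ⟨hu, hpar : u 0 % 2 = ε⟩ := hu
    rw [grid_succ] at hu
    obtain ⟨hpos, hsum⟩ := hu
    have hlower := sum_lower_add m u hpos
    simp only [Set.mem_ofPred_eq]
    omega

end Parity

theorem ncard_grid {n : ℕ} (hn : n ≠ 0) (N : ℕ) :
    (grid n N).ncard = (N / 2 + 1).choose n + ((N + 1) / 2).choose n := by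
  obtain ⟨m, rfl⟩ := Nat.exists_eq_add_one_of_ne_zero hn
  have hodd : grid (m + 1) N \ {u | u 0 % 2 = 0} = grid (m + 1) N ∩ {u | u 0 % 2 = 1} := by
    ext u
    simp only [Set.mem_sdiff, Set.mem_inter_iff, Set.mem_ofPred_eq]
    exact and_congr_right fun _ => by omega
  have hcount (ε : ℕ) (hε : ε < 2) :
      {v : Fin (m + 1) → ℕ | 2 * (∑ i, v i + m) + ε ≤ N}.ncard =
        ((N + ε) / 2 + (m + 1) - (m + ε)).choose (m + 1) := by
    rw [← Fin.ncard_sum_add_le m.add_one_ne_zero]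
    congr 1; ext v; simp only [Set.mem_ofPred_eq]; omega
  rw [← Set.ncard_inter_add_ncard_sdiff_eq_ncard _ {u | u 0 % 2 = 0} (grid_finite _ _), hodd,
    ncard_grid_inter_parity m N 0 (by norm_num), ncard_grid_inter_parity m N 1 (by norm_num),
    hcount 0 (by norm_num), hcount 1 (by norm_num)]
  congr 2 <;> omega

end Cn

/-- For `C_n` (`n ≥ 2`), the number of tuples `(u_0,…,u_n)` of nonnegative
integers with `u_1,…,u_{n-1} ≥ 1` and `u_0 + 2u_1 + ⋯ + 2u_{n-1} + u_n = 2k` equals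
`C(k+1,n) + C(k,n)`, and with the same constraints summing to `2k+1` it equals
`2·C(k+1,n)`. -/
theorem count_Fs_Cn (n k : ℕ) (hn : 2 ≤ n) :
    Set.ncard {u : Fin (n + 1) → ℕ |
        (∀ i : Fin (n + 1), 1 ≤ (i : ℕ) → (i : ℕ) ≤ n - 1 → 1 ≤ u i) ∧
        (∑ i : Fin (n + 1), (if (i : ℕ) = 0 ∨ (i : ℕ) = n then 1 else 2) * u i) = 2 * k} =
      (k + 1).choose n + k.choose n ∧
    Set.ncard {u : Fin (n + 1) → ℕ |
        (∀ i : Fin (n + 1), 1 ≤ (i : ℕ) → (i : ℕ) ≤ n - 1 → 1 ≤ u i) ∧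
        (∑ i : Fin (n + 1), (if (i : ℕ) = 0 ∨ (i : ℕ) = n then 1 else 2) * u i) = 2 * k + 1} =
      2 * (k + 1).choose n := by
  have hcount := Cn.ncard_grid (n := n) (by omega)
  refine ⟨(hcount (2 * k)).trans ?_, (hcount (2 * k + 1)).trans ?_⟩
  · rw [show 2 * k / 2 + 1 = k + 1 by omega, show (2 * k + 1) / 2 = k by omega]
  · rw [show (2 * k + 1) / 2 + 1 = k + 1 by omega, show (2 * k + 1 + 1) / 2 = k + 1 by omega,
      two_mul]
end

section
/- For C_n (n ≥ 2) and k ∈ ℕ, the number of tuples (u_0,…,u_n) of nonnegative integers with u_0 ≥ 1, u_n ≥ 1 and u_0 + 2u_1 + ⋯ + 2u_{n−1} + u_n = 2k equals C(n+k−1, n) + C(n+k−2, n), and with sum 2k+1 it equals 2·C(n+k−1, n). -/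
/-!
Write `u₀ = 2x + a` and `uₙ = 2y + b` with `a, b ∈ {1, 2}`, so that `a` and `b` record
the parities of the two ends. The weighted sum becomes `2(x + u₁ + ⋯ + uₙ₋₁ + y) + a + b`,
so the tuples with given `a, b` correspond bijectively to tuples of `n + 1` naturals with a
prescribed sum, which stars and bars counts. An even total allows `(a, b) = (1, 1)` or
`(2, 2)`, an odd total `(1, 2)` or `(2, 1)`.
-/

open Finset

theorem ncard_sum_eq {α : Type*} [Fintype α] (m : ℕ) :
    {v : α → ℕ | ∑ i, v i = m}.ncard = (Fintype.card α + m - 1).choose m := by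
  classical
  rw [← Nat.card_coe_set_eq]
  exact (Nat.card_congr (Sym.equivNatSumOfFintype α m)).symm.trans
    (by rw [Sym.natCard_sym_eq_choose, Nat.card_eq_fintype_card])

section

variable {n : ℕ} [NeZero n]

-- For `k < j` the set is empty and `n + k - j < n` because `n ≠ 0`, so truncation is harmless.
theorem ncard_sum_add_eq (j k : ℕ) :
    {v : Fin (n + 1) → ℕ | ∑ i, v i + j = k}.ncard = (n + k - j).choose n := by
  have hn := NeZero.ne n
  rcases le_or_gt j k with hjk | hkj
  · have hset : {v : Fin (n + 1) → ℕ | ∑ i, v i + j = k} = {v | ∑ i, v i = k - j} := by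
      ext v
      simp only [Set.mem_ofPred_eq]
      omega
    rw [hset, ncard_sum_eq, Fintype.card_fin, show n + 1 + (k - j) - 1 = n + (k - j) by omega,
      ← Nat.choose_symm_add, Nat.add_sub_assoc hjk]
  · have hset : {v : Fin (n + 1) → ℕ | ∑ i, v i + j = k} = ∅ := by
      ext v
      simp only [Set.mem_ofPred_eq, Set.mem_empty_iff_false, iff_false]
      omega
    rw [hset, Set.ncard_empty, Nat.choose_eq_zero_of_lt (by omega)]

end

def cnWeightedSum (n : ℕ) (u : Fin (n + 1) → ℕ) : ℕ :=
  ∑ i : Fin (n + 1), (if (i : ℕ) = 0 ∨ (i : ℕ) = n then 1 else 2) * u i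

/-- The points of `F^l_M` for `C_n` with `u₀ + 2u₁ + ⋯ + 2uₙ₋₁ + uₙ = N`. -/
def cnTuples (n N : ℕ) : Set (Fin (n + 1) → ℕ) :=
  {u | 1 ≤ u 0 ∧ 1 ≤ u (Fin.last n) ∧ cnWeightedSum n u = N}

theorem le_cnWeightedSum {n : ℕ} (u : Fin (n + 1) → ℕ) (i : Fin (n + 1)) :
    u i ≤ cnWeightedSum n u :=
  calc u i ≤ (if (i : ℕ) = 0 ∨ (i : ℕ) = n then 1 else 2) * u i :=
        Nat.le_mul_of_pos_left _ (by split_ifs <;> omega)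
    _ ≤ cnWeightedSum n u :=
      single_le_sum
        (f := fun j : Fin (n + 1) => (if (j : ℕ) = 0 ∨ (j : ℕ) = n then 1 else 2) * u j)
        (fun _ _ => Nat.zero_le _) (mem_univ i)

theorem cnTuples_finite (n N : ℕ) : (cnTuples n N).Finite :=
  (Set.finite_Iic fun _ => N).subset fun u hu i => hu.2.2 ▸ le_cnWeightedSum u i

theorem ncard_cnTuples_eq_add (n N : ℕ) :
    (cnTuples n N).ncard =
      {u ∈ cnTuples n N | u 0 % 2 = 1}.ncard + {u ∈ cnTuples n N | u 0 % 2 = 0}.ncard := by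
  rw [← Set.ncard_inter_add_ncard_sdiff_eq_ncard (cnTuples n N) {u | u 0 % 2 = 1}
    (cnTuples_finite n N)]
  congr 2
  ext u
  simp only [Set.mem_sdiff, Set.mem_ofPred_eq, Nat.mod_two_ne_one]

/-- `u₀ = 2v₀ + a`, `uₙ = 2vₙ + b`, and `uᵢ = vᵢ` in between. -/
def endpointLift (n a b : ℕ) (v : Fin (n + 1) → ℕ) : Fin (n + 1) → ℕ :=
  v + Pi.single 0 (v 0 + a) + Pi.single (Fin.last n) (v (Fin.last n) + b)

theorem endpointLift_apply_of_ne {n : ℕ} (a b : ℕ) (v : Fin (n + 1) → ℕ) {i : Fin (n + 1)}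
    (h0 : i ≠ 0) (hl : i ≠ Fin.last n) : endpointLift n a b v i = v i := by
  simp [endpointLift, h0, hl]

section

variable {n : ℕ} [NeZero n] (a b : ℕ) (v : Fin (n + 1) → ℕ)

theorem cnWeightedSum_add_endpoints (u : Fin (n + 1) → ℕ) :
    cnWeightedSum n u + (u 0 + u (Fin.last n)) = 2 * ∑ i, u i := by
  rw [← sum_pair Fin.last_pos'.ne, ← univ_inter {0, Fin.last n}, ← sum_ite_mem, cnWeightedSum,
    ← sum_add_distrib, mul_sum]
  refine sum_congr rfl fun i _ => ?_
  simp only [mem_insert, mem_singleton, Fin.ext_iff, Fin.val_zero, Fin.val_last]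
  split_ifs <;> omega

theorem endpointLift_apply_zero : endpointLift n a b v 0 = 2 * v 0 + a := by
  simp [endpointLift, Fin.last_pos'.ne]
  ring

theorem endpointLift_apply_last : endpointLift n a b v (Fin.last n) = 2 * v (Fin.last n) + b := by
  simp [endpointLift, Fin.last_pos'.ne']
  ring

theorem cnWeightedSum_endpointLift :
    cnWeightedSum n (endpointLift n a b v) = 2 * ∑ i, v i + a + b := by
  have hsum : ∑ i, endpointLift n a b v i = ∑ i, v i + (v 0 + a) + (v (Fin.last n) + b) := by
    simp [endpointLift, sum_add_distrib, sum_pi_single']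
  have := cnWeightedSum_add_endpoints (endpointLift n a b v)
  rw [hsum, endpointLift_apply_zero, endpointLift_apply_last] at this
  omega

theorem endpointLift_injective : Function.Injective (endpointLift (n := n) a b) := by
  intro v w h
  funext i
  by_cases h0 : i = 0
  · have := congrFun h 0
    rw [endpointLift_apply_zero, endpointLift_apply_zero] at this
    subst h0
    omega
  by_cases hl : i = Fin.last n
  · have := congrFun h (Fin.last n)
    rw [endpointLift_apply_last, endpointLift_apply_last] at this
    subst hl
    omega
  simpa [endpointLift_apply_of_ne, h0, hl] using congrFun h i

variable {a b} {N j k r : ℕ}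

theorem parityClass_eq_image (ha : a = 1 ∨ a = 2) (hb : b = 1 ∨ b = 2)
    (hN : N + 2 * j = 2 * k + a + b) (hr : a % 2 = r) :
    {u ∈ cnTuples n N | u 0 % 2 = r} = endpointLift n a b '' {v | ∑ i, v i + j = k} := by
  ext u
  constructor
  · rintro ⟨⟨h0, hl, hW⟩, hpar⟩
    have hW' := cnWeightedSum_add_endpoints u
    let v : Fin (n + 1) → ℕ := fun i =>
      if i = 0 then (u 0 - a) / 2 else if i = Fin.last n then (u (Fin.last n) - b) / 2 else u i
    have hv : endpointLift n a b v = u := by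
      funext i
      by_cases hi0 : i = 0
      · subst hi0
        rw [endpointLift_apply_zero]
        simp only [v, if_pos rfl]
        omega
      by_cases hil : i = Fin.last n
      · subst hil
        rw [endpointLift_apply_last]
        dsimp only [v]
        rw [if_neg Fin.last_pos'.ne', if_pos rfl]
        omega
      rw [endpointLift_apply_of_ne a b v hi0 hil]
      simp only [v, if_neg hi0, if_neg hil]
    refine ⟨v, ?_, hv⟩
    have := cnWeightedSum_endpointLift a b v
    rw [hv] at this
    simp only [Set.mem_ofPred_eq]
    omega
  · rintro ⟨v, hv, rfl⟩
    simp only [Set.mem_ofPred_eq] at hv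
    refine ⟨⟨?_, ?_, ?_⟩, ?_⟩
    · rw [endpointLift_apply_zero]; omega
    · rw [endpointLift_apply_last]; omega
    · rw [cnWeightedSum_endpointLift]; omega
    · rw [endpointLift_apply_zero]; omega

theorem ncard_parityClass (ha : a = 1 ∨ a = 2) (hb : b = 1 ∨ b = 2)
    (hN : N + 2 * j = 2 * k + a + b) (hr : a % 2 = r) :
    {u ∈ cnTuples n N | u 0 % 2 = r}.ncard = (n + k - j).choose n := by
  rw [parityClass_eq_image ha hb hN hr,
    Set.ncard_image_of_injective _ (endpointLift_injective a b), ncard_sum_add_eq]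

end

/-- For `C_n` (`n ≥ 2`), the number of tuples `(u_0,…,u_n)` of nonnegative
integers with `u_0 ≥ 1`, `u_n ≥ 1` and `u_0 + 2u_1 + ⋯ + 2u_{n-1} + u_n = 2k` equals
`C(n+k-1,n) + C(n+k-2,n)`, and with sum `2k+1` it equals `2·C(n+k-1,n)`. -/
theorem count_Fl_Cn (n k : ℕ) (hn : 2 ≤ n) :
    Set.ncard {u : Fin (n + 1) → ℕ |
        1 ≤ u 0 ∧ 1 ≤ u (Fin.last n) ∧
        (∑ i : Fin (n + 1), (if (i : ℕ) = 0 ∨ (i : ℕ) = n then 1 else 2) * u i) = 2 * k} =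
      (n + k - 1).choose n + (n + k - 2).choose n ∧
    Set.ncard {u : Fin (n + 1) → ℕ |
        1 ≤ u 0 ∧ 1 ≤ u (Fin.last n) ∧
        (∑ i : Fin (n + 1), (if (i : ℕ) = 0 ∨ (i : ℕ) = n then 1 else 2) * u i) = 2 * k + 1} =
      2 * (n + k - 1).choose n := by
  have : NeZero n := ⟨by omega⟩
  refine ⟨?_, ?_⟩
  · change (cnTuples n (2 * k)).ncard = _
    rw [ncard_cnTuples_eq_add,
      ncard_parityClass (N := 2 * k) (j := 1) (k := k) (r := 1) (.inl rfl) (.inl rfl) rfl rfl,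
      ncard_parityClass (N := 2 * k) (j := 2) (k := k) (r := 0) (.inr rfl) (.inr rfl) (by ring)
        rfl]
  · change (cnTuples n (2 * k + 1)).ncard = _
    rw [ncard_cnTuples_eq_add,
      ncard_parityClass (N := 2 * k + 1) (j := 1) (k := k) (r := 1) (.inl rfl) (.inr rfl)
        (by ring) rfl,
      ncard_parityClass (N := 2 * k + 1) (j := 1) (k := k) (r := 0) (.inr rfl) (.inl rfl)
        (by ring) rfl, two_mul]
end
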